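/- Let n ≥ 2 be a natural number and ξ a primitive n-th root of unity in ℂ. Then the sum over j from 1 to n-1 of ξ^j/(1 - ξ^j)^2 equals -(n^2 - 1)/12. -/

import Mathlib

/-!
The weighted geometric sum `T(x) = ∑_{k<n} k (n - k) x^k` satisfies
`T(x) (x - 1)^2 = 2 n x` whenever `x^n = 1`, so `x / (1 - x)^2 = T(x) / (2n)` for every nontrivial
`n`-th root of unity `x`. Summing over `x = ξ^j`, `1 ≤ j < n`, and exchanging the sums, each
`∑_j ξ^{jk}` with `0 < k < n` equals `-1`, so the sum is `-(∑_{k<n} k (n - k)) / (2n)`,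
and `∑_{k<n} k (n - k) = n (n^2 - 1) / 6`.
-/

open Finset

section CommRing

variable {R : Type*} [CommRing R]

theorem sum_range_natCast_mul_pow_mul_sub_one_sq (x : R) (n : ℕ) :
    (∑ k ∈ range n, (k : R) * x ^ k) * (x - 1) ^ 2 = x ^ n * (n * (x - 1) - x) + x := by
  induction n with
  | zero => simp
  | succ n ih =>
    rw [sum_range_succ, add_mul, ih]
    push_cast
    ring

theorem sum_range_natCast_mul_sub_mul_pow_mul_sub_one_cube (x : R) (n : ℕ) :
    (∑ k ∈ range n, (k : R) * (n - k) * x ^ k) * (x - 1) ^ 3 =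
      x * (x ^ n * (n * (x - 1) - (x + 1)) + n * (x - 1) + (x + 1)) := by
  induction n with
  | zero => simp
  | succ n ih =>
    have hsplit : ∑ k ∈ range n, (k : R) * ((n + 1 : ℕ) - k) * x ^ k =
        ∑ k ∈ range n, (k : R) * (n - k) * x ^ k + ∑ k ∈ range n, (k : R) * x ^ k := by
      rw [← sum_add_distrib]
      exact sum_congr rfl fun k _ => by push_cast; ring
    rw [sum_range_succ, hsplit]
    push_cast
    linear_combination ih + (x - 1) * sum_range_natCast_mul_pow_mul_sub_one_sq x n

theorem sum_range_natCast_mul_sub_mul_six (m : R) (n : ℕ) :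
    (∑ k ∈ range n, (k : R) * (m - k)) * 6 = n * (n - 1) * (3 * m - 2 * n + 1) := by
  induction n with
  | zero => simp
  | succ n ih =>
    rw [sum_range_succ, add_mul, ih]
    push_cast
    ring

end CommRing

section Field

variable {K : Type*} [Field K] {x : K} {n : ℕ}

theorem two_mul_natCast_mul_div_one_sub_sq_of_pow_eq_one (hx : x ^ n = 1) (hx1 : x ≠ 1) :
    2 * n * (x / (1 - x) ^ 2) = ∑ k ∈ range n, (k : K) * (n - k) * x ^ k := by
  have hcube := sum_range_natCast_mul_sub_mul_pow_mul_sub_one_cube x n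
  rw [hx] at hcube
  rw [mul_div_assoc', div_eq_iff (pow_ne_zero 2 (sub_ne_zero.mpr hx1.symm))]
  apply mul_right_cancel₀ (sub_ne_zero.mpr hx1)
  linear_combination -hcube

theorem sum_Icc_one_pow_of_pow_eq_one (hx : x ^ n = 1) (hx1 : x ≠ 1) (hn : n ≠ 0) :
    ∑ j ∈ Icc 1 (n - 1), x ^ j = -1 := by
  have hgeom : ∑ j ∈ range n, x ^ j = 0 := by
    rw [geom_sum_eq hx1, hx, sub_self, zero_div]
  obtain ⟨m, rfl⟩ := Nat.exists_eq_add_one_of_ne_zero hn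
  rw [sum_range_succ', pow_zero] at hgeom
  rw [Nat.add_sub_cancel, ← Ico_add_one_right_eq_Icc, sum_Ico_eq_sum_range, Nat.add_sub_cancel]
  simp_rw [add_comm 1]
  linear_combination hgeom

end Field

theorem sum_root_div_sq_primitive_root (n : ℕ) (hn : 2 ≤ n) (ξ : ℂ)
    (hξ : IsPrimitiveRoot ξ n) :
    ∑ j ∈ Finset.Icc 1 (n - 1), ξ ^ j / (1 - ξ ^ j) ^ 2 = -((n : ℂ) ^ 2 - 1) / 12 := by
  have hn0 : n ≠ 0 := by omega
  have hroot (i : ℕ) : (ξ ^ i) ^ n = 1 := by rw [pow_right_comm, hξ.pow_eq_one, one_pow]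
  have hterm : ∀ j ∈ Icc 1 (n - 1), 2 * n * (ξ ^ j / (1 - ξ ^ j) ^ 2) =
      ∑ k ∈ range n, (k : ℂ) * (n - k) * (ξ ^ k) ^ j := fun j hj => by
    simp_rw [← pow_mul, mul_comm _ j, pow_mul]
    exact two_mul_natCast_mul_div_one_sub_sq_of_pow_eq_one (hroot j)
      (hξ.pow_ne_one_of_pos_of_lt (by grind) (by grind))
  have hinner : ∀ k ∈ range n, ∑ j ∈ Icc 1 (n - 1), (k : ℂ) * (n - k) * (ξ ^ k) ^ j =
      -((k : ℂ) * (n - k)) := fun k hk => by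
    rcases eq_or_ne k 0 with rfl | hk0
    · simp
    rw [← mul_sum, sum_Icc_one_pow_of_pow_eq_one (hroot k)
      (hξ.pow_ne_one_of_pos_of_lt hk0 (mem_range.mp hk)) hn0, mul_neg_one]
  have hsum : 2 * n * ∑ j ∈ Icc 1 (n - 1), ξ ^ j / (1 - ξ ^ j) ^ 2 =
      -∑ k ∈ range n, (k : ℂ) * (n - k) := by
    rw [mul_sum, sum_congr rfl hterm, sum_comm, sum_congr rfl hinner, sum_neg_distrib]
  rw [eq_div_iff (by norm_num)]
  apply mul_left_cancel₀ (Nat.cast_ne_zero.mpr hn0 : (n : ℂ) ≠ 0)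
  linear_combination 6 * hsum - sum_range_natCast_mul_sub_mul_six (n : ℂ) n
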